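/- arXiv:2601.10235 — 3 statements merged into one kernel-verified Lean document; each statement's English description precedes it below -/
import Mathlib

section
/- Proposition (every converging orbit enters U). Let ε > 0 and θ ∈ (0,π/2) be small enough (as in the invariance proposition for U). Let x ∈ ℂⁿ be a point whose orbit under f is defined for all times and satisfies f^{∘j}(x) → 0 as j → +∞. Then there exists j₀ ∈ ℕ such that for all j ≥ j₀, f^{∘j}(x) ∈ U(ε,θ). -/
/-!
Write `z_j = x_j^M` along the orbit. The recurrence and `⟨a, M⟩ = -1` give
`z_{j+1} = z_j - z_j^2 + o(z_j^2)`, so `1/z_{j+1} - 1/z_j → 1` and, by Cesàro, `j z_j → 1`;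
in particular `z_j` eventually lies in every sector `C(ε,θ)`. Each coordinate is multiplied at
step `j` by `1 + z_j (a_i + o(1)) = 1 + a_i/j + o(1/j)`, so `|x_{j,i}| = O(j^σ)` for every
`σ ∈ (Re a_i, 0]`, while `|x_j^m|^γ = |z_j|^{γ/d} ≈ j^{-γ/d}`. Since `Re a_i < -γ/d`, a choice
`σ < -γ/d` gives `|x_{j,i}| < |x_j^m|^γ` eventually.
-/

noncomputable section

open Complex Filter Topology Set Function

/-- The monomial `x^M = x_1^{M_1} ⋯ x_n^{M_n}`. -/
def monom {n : ℕ} (M : Fin n → ℕ) (x : Fin n → ℂ) : ℂ := ∏ i, x i ^ M i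

/-- The sector `C(ε,θ) = {z ∈ ℂ* : |z| < ε, |arg z| < θ}`. -/
def sectC (ε θ : ℝ) : Set ℂ := {z | z ≠ 0 ∧ ‖z‖ < ε ∧ |Complex.arg z| < θ}

/-- The domain `U(ε,θ) = {x : x^M ∈ C(ε,θ), |x_i| < |x^m|^γ ∀ i}`. -/
def Uset {n : ℕ} (M m : Fin n → ℕ) (γ ε θ : ℝ) : Set (Fin n → ℂ) :=
  {x | monom M x ∈ sectC ε θ ∧ ∀ i, ‖x i‖ < ‖monom m x‖ ^ γ}

open Asymptotics

theorem norm_one_add_le_exp (ζ : ℂ) : ‖1 + ζ‖ ≤ Real.exp (ζ.re + ‖ζ‖ ^ 2) := by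
  have hsq : ‖1 + ζ‖ ^ 2 = 1 + (2 * ζ.re + ‖ζ‖ ^ 2) := by
    rw [← Complex.normSq_eq_norm_sq, ← Complex.normSq_eq_norm_sq]
    simp only [Complex.normSq_apply, Complex.add_re, Complex.add_im, Complex.one_re,
      Complex.one_im]
    ring
  refine (pow_le_pow_iff_left₀ (norm_nonneg _) (Real.exp_pos _).le two_ne_zero).1 ?_
  calc ‖1 + ζ‖ ^ 2 ≤ Real.exp (2 * ζ.re + ‖ζ‖ ^ 2) := by
        linarith [Real.add_one_le_exp (2 * ζ.re + ‖ζ‖ ^ 2)]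
    _ ≤ Real.exp (2 * (ζ.re + ‖ζ‖ ^ 2)) := Real.exp_le_exp.2 (by nlinarith [sq_nonneg ‖ζ‖])
    _ = Real.exp (ζ.re + ‖ζ‖ ^ 2) ^ 2 := by rw [← Real.exp_nat_mul]; norm_num

theorem exp_div_le_one_add_inv_rpow {x σ : ℝ} (hx : 0 < x) (hσ : σ ≤ 0) :
    Real.exp (σ / x) ≤ (1 + x⁻¹) ^ σ := by
  rw [Real.rpow_def_of_pos (by positivity), Real.exp_le_exp, div_eq_mul_inv, mul_comm]
  refine mul_le_mul_of_nonpos_right ?_ hσ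
  linarith [Real.log_le_sub_one_of_pos (show 0 < 1 + x⁻¹ by positivity)]

theorem isBigO_natCast_rpow_of_le_mul_exp {u : ℕ → ℝ} {σ : ℝ} (hσ : σ ≤ 0)
    (hu : ∀ᶠ j in atTop, 0 ≤ u j ∧ u (j + 1) ≤ u j * Real.exp (σ / j)) :
    u =O[atTop] fun j => (j : ℝ) ^ σ := by
  obtain ⟨N, hN⟩ := eventually_atTop.1 (hu.and (eventually_ge_atTop 1))
  set K := u N / (N : ℝ) ^ σ
  have hNpos : (0 : ℝ) < N := by exact_mod_cast (hN N le_rfl).2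
  -- `exp (σ / j) ≤ ((j + 1) / j) ^ σ` makes `u j / j ^ σ` nonincreasing from `N` on.
  have hbound : ∀ j, N ≤ j → u j ≤ K * (j : ℝ) ^ σ := by
    intro j hj
    induction j, hj using Nat.le_induction with
    | base => rw [div_mul_cancel₀ _ (Real.rpow_pos_of_pos hNpos σ).ne']
    | succ j hj ih =>
      obtain ⟨⟨hu0, hstep⟩, hj1⟩ := hN j hj
      have hjpos : (0 : ℝ) < j := by exact_mod_cast hj1
      calc u (j + 1) ≤ u j * Real.exp (σ / j) := hstep
        _ ≤ K * (j : ℝ) ^ σ * (1 + (j : ℝ)⁻¹) ^ σ :=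
          mul_le_mul ih (exp_div_le_one_add_inv_rpow hjpos hσ) (Real.exp_pos _).le
            (hu0.trans ih)
        _ = K * ((j + 1 : ℕ) : ℝ) ^ σ := by
          rw [mul_assoc, ← Real.mul_rpow hjpos.le (by positivity), mul_add, mul_one,
            mul_inv_cancel₀ hjpos.ne']
          push_cast
          ring_nf
  refine IsBigO.of_bound K ?_
  filter_upwards [eventually_ge_atTop N] with j hj
  rw [Real.norm_of_nonneg (hN j hj).1.1, Real.norm_of_nonneg (by positivity)]
  exact hbound j hj

theorem tendsto_zero_of_tendsto_natCast_mul {𝕜 : Type*} [RCLike 𝕜] {ζ : ℕ → 𝕜} {a : 𝕜}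
    (h : Tendsto (fun j : ℕ => (j : 𝕜) * ζ j) atTop (𝓝 a)) : Tendsto ζ atTop (𝓝 0) := by
  have := (tendsto_inv_atTop_nhds_zero_nat (𝕜 := 𝕜)).mul h
  rw [zero_mul] at this
  refine this.congr' ?_
  filter_upwards [eventually_ge_atTop 1] with j hj
  rw [← mul_assoc, inv_mul_cancel₀ (by exact_mod_cast (Nat.one_le_iff_ne_zero.1 hj)), one_mul]

theorem eventually_norm_one_add_le_exp {ζ : ℕ → ℂ} {a : ℂ} {σ : ℝ}
    (h : Tendsto (fun j : ℕ => (j : ℂ) * ζ j) atTop (𝓝 a)) (hσ : a.re < σ) :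
    ∀ᶠ j in atTop, ‖1 + ζ j‖ ≤ Real.exp (σ / j) := by
  have hlim : Tendsto (fun j : ℕ => ((j : ℂ) * ζ j).re + ‖(j : ℂ) * ζ j‖ * ‖ζ j‖) atTop
      (𝓝 (a.re + ‖a‖ * 0)) :=
    (Complex.continuous_re.tendsto a |>.comp h).add
      ((continuous_norm.tendsto a |>.comp h).mul
        (by simpa using (tendsto_zero_of_tendsto_natCast_mul h).norm))
  rw [mul_zero, add_zero] at hlim
  filter_upwards [hlim.eventually_lt_const hσ, eventually_ge_atTop 1] with j hj hj1
  have hjpos : (0 : ℝ) < j := by exact_mod_cast hj1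
  refine (norm_one_add_le_exp _).trans (Real.exp_le_exp.2 ?_)
  rw [le_div_iff₀ hjpos]
  have : ((j : ℂ) * ζ j).re + ‖(j : ℂ) * ζ j‖ * ‖ζ j‖ = ((ζ j).re + ‖ζ j‖ ^ 2) * j := by
    rw [← Complex.ofReal_natCast, Complex.re_ofReal_mul, norm_mul, Complex.norm_real,
      Real.norm_of_nonneg hjpos.le]
    ring
  linarith

theorem tendsto_prod_sub_one_div {α ι K : Type*} [Field K] [TopologicalSpace K]
    [IsTopologicalRing K] {l : Filter α} (s : Finset ι) {P : ι → α → K} {u : α → K}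
    {L : ι → K} (hP : ∀ i ∈ s, Tendsto (P i) l (𝓝 1))
    (hL : ∀ i ∈ s, Tendsto (fun x => (P i x - 1) / u x) l (𝓝 (L i))) :
    Tendsto (fun x => ((∏ i ∈ s, P i x) - 1) / u x) l (𝓝 (∑ i ∈ s, L i)) := by
  induction s using Finset.cons_induction with
  | empty => simpa using tendsto_const_nhds
  | cons c s hc ih =>
    have hsplit : ∀ x, ((∏ i ∈ s.cons c hc, P i x) - 1) / u x
        = P c x * (((∏ i ∈ s, P i x) - 1) / u x) + (P c x - 1) / u x := by
      intro x; rw [Finset.prod_cons]; ring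
    simp only [hsplit, Finset.sum_cons, Finset.forall_mem_cons] at hP hL ⊢
    simpa [add_comm] using (hP.1.mul (ih hP.2 hL.2)).add hL.1

theorem tendsto_pow_sub_one_div {α K : Type*} [Field K] [TopologicalSpace K]
    [IsTopologicalRing K] {l : Filter α} {p u : α → K} {L : K} (k : ℕ)
    (hp : Tendsto p l (𝓝 1)) (hL : Tendsto (fun x => (p x - 1) / u x) l (𝓝 L)) :
    Tendsto (fun x => (p x ^ k - 1) / u x) l (𝓝 (k * L)) := by
  simpa [Finset.prod_const, nsmul_eq_mul] using
    tendsto_prod_sub_one_div (Finset.range k) (fun _ _ => hp) (fun _ _ => hL)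

theorem tendsto_inv_smul_of_tendsto_sub {E : Type*} [NormedAddCommGroup E] [NormedSpace ℝ E]
    {w : ℕ → E} {c : E} (h : Tendsto (fun j => w (j + 1) - w j) atTop (𝓝 c)) :
    Tendsto (fun j : ℕ => (j⁻¹ : ℝ) • w j) atTop (𝓝 c) := by
  have hw0 : Tendsto (fun j : ℕ => (j⁻¹ : ℝ) • w 0) atTop (𝓝 0) := by
    simpa using (tendsto_inv_atTop_nhds_zero_nat (𝕜 := ℝ)).smul_const (w 0)
  have hsum := hw0.add h.cesaro_smul
  rw [zero_add] at hsum
  refine hsum.congr fun j => ?_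
  rw [← smul_add, Finset.sum_range_sub (f := w), add_sub_cancel]

theorem tendsto_natCast_mul_of_tendsto_sub_div_sq {z : ℕ → ℂ} (hz : Tendsto z atTop (𝓝 0))
    (hz0 : ∀ᶠ j in atTop, z j ≠ 0)
    (h : Tendsto (fun j => (z (j + 1) - z j) / z j ^ 2) atTop (𝓝 (-1))) :
    Tendsto (fun j : ℕ => (j : ℂ) * z j) atTop (𝓝 1) := by
  have hratio : Tendsto (fun j => z (j + 1) / z j) atTop (𝓝 1) := by
    have := (h.mul hz).const_add 1
    rw [mul_zero, add_zero] at this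
    refine this.congr' ?_
    filter_upwards [hz0] with j hj
    rw [pow_two, div_mul_eq_div_div, div_mul_cancel₀ _ hj, sub_div, div_self hj]
    ring
  have hinv : Tendsto (fun j => (z (j + 1))⁻¹ - (z j)⁻¹) atTop (𝓝 1) := by
    have := h.neg.div hratio one_ne_zero
    rw [neg_neg, div_one] at this
    refine this.congr' ?_
    filter_upwards [hz0, (tendsto_add_atTop_nat 1).eventually hz0] with j hj hj1
    rw [Pi.div_apply, inv_sub_inv hj1 hj, div_div_eq_mul_div, pow_two]
    field_simp
    ring
  have := (tendsto_inv_smul_of_tendsto_sub (w := fun j => (z j)⁻¹) hinv).inv₀ one_ne_zero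
  rw [inv_one] at this
  refine this.congr' ?_
  filter_upwards [hz0] with j hj
  rw [Complex.real_smul, mul_inv, inv_inv, Complex.ofReal_inv, inv_inv, Complex.ofReal_natCast]

theorem isLittleO_natCast_rpow_rpow {σ τ : ℝ} (h : σ < τ) :
    (fun j : ℕ => (j : ℝ) ^ σ) =o[atTop] fun j : ℕ => (j : ℝ) ^ τ := by
  have hlim : Tendsto (fun j : ℕ => (j : ℝ) ^ (-(τ - σ))) atTop (𝓝 0) :=
    (tendsto_rpow_neg_atTop (sub_pos.2 h)).comp tendsto_natCast_atTop_atTop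
  refine ((isLittleO_one_iff ℝ).2 hlim).mul_isBigO (isBigO_refl (fun j : ℕ => (j : ℝ) ^ τ) atTop) |>.congr' ?_ ?_
  · filter_upwards [eventually_ge_atTop 1] with j hj
    rw [← Real.rpow_add (by exact_mod_cast hj), neg_sub, sub_add_cancel]
  · simp

theorem isBigO_natCast_rpow_neg_of_tendsto_mul {r : ℕ → ℝ}
    (hr : Tendsto (fun j : ℕ => j * r j) atTop (𝓝 1)) (c : ℝ) :
    (fun j : ℕ => (j : ℝ) ^ (-c)) =O[atTop] fun j => r j ^ c := by
  have hbdd : (fun j : ℕ => (j * r j) ^ (-c)) =O[atTop] fun _ => (1 : ℝ) :=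
    (hr.rpow_const (Or.inl one_ne_zero)).isBigO_one ℝ
  refine (hbdd.mul (isBigO_refl (fun j => r j ^ c) atTop)).congr' ?_ (by simp)
  filter_upwards [hr.eventually_const_lt one_pos, eventually_ge_atTop 1] with j hj hj1
  have hjpos : (0 : ℝ) < j := by exact_mod_cast hj1
  have hrpos : 0 < r j := pos_of_mul_pos_right hj hjpos.le
  rw [Real.mul_rpow hjpos.le hrpos.le, mul_assoc, ← Real.rpow_add hrpos, neg_add_cancel,
    Real.rpow_zero, mul_one]

theorem eventually_lt_rpow_of_isBigO {u r : ℕ → ℝ} {σ c : ℝ}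
    (hu : u =O[atTop] fun j => (j : ℝ) ^ σ)
    (hr : Tendsto (fun j : ℕ => j * r j) atTop (𝓝 1)) (hσ : σ < -c) :
    ∀ᶠ j in atTop, u j < r j ^ c := by
  have ho := hu.trans_isLittleO (isLittleO_natCast_rpow_rpow hσ)
    |>.trans_isBigO (isBigO_natCast_rpow_neg_of_tendsto_mul hr c)
  filter_upwards [ho.def one_half_pos, hr.eventually_const_lt one_pos,
    eventually_ge_atTop 1] with j hj hjr hj1
  have hrpos : 0 < r j ^ c :=
    Real.rpow_pos_of_pos (pos_of_mul_pos_right hjr (Nat.cast_nonneg j)) c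
  rw [Real.norm_of_nonneg hrpos.le] at hj
  linarith [le_abs_self (u j), Real.norm_eq_abs (u j)]

section Monomial

variable {n : ℕ}

theorem continuous_monom (M : Fin n → ℕ) : Continuous (monom M) :=
  continuous_finsetProd _ fun i _ => (continuous_apply i).pow _

theorem monom_zero {M : Fin n → ℕ} (hM : M ≠ 0) : monom M 0 = 0 := by
  obtain ⟨i, hi⟩ := Function.ne_iff.1 hM
  exact Finset.prod_eq_zero (Finset.mem_univ i) (by simp [zero_pow hi])

theorem monom_mul (M : Fin n → ℕ) (x x' : Fin n → ℂ) :
    monom M (x * x') = monom M x * monom M x' := by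
  simp only [monom, Pi.mul_apply, mul_pow, Finset.prod_mul_distrib]

theorem monom_eq_pow {M m : Fin n → ℕ} {d : ℕ} (hm : ∀ i, M i = d * m i) (x : Fin n → ℂ) :
    monom M x = monom m x ^ d := by
  simp only [monom, ← Finset.prod_pow, ← pow_mul, hm, mul_comm]

theorem norm_monom_rpow {M m : Fin n → ℕ} {d : ℕ} (hm : ∀ i, M i = d * m i) (hd : d ≠ 0)
    (x : Fin n → ℂ) (γ : ℝ) : ‖monom m x‖ ^ γ = ‖monom M x‖ ^ (γ / d) := by
  rw [monom_eq_pow hm, norm_pow, ← Real.rpow_natCast_mul (norm_nonneg _),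
    mul_div_cancel₀ _ (Nat.cast_ne_zero.2 hd)]

theorem tendsto_monom_one_add_smul_sub_one_div {α : Type*} {l : Filter α} {M : Fin n → ℕ}
    {t : α → ℂ} {v : α → Fin n → ℂ} {a : Fin n → ℂ} (ht : Tendsto t l (𝓝 0))
    (ht0 : ∀ᶠ x in l, t x ≠ 0) (hv : Tendsto v l (𝓝 a)) :
    Tendsto (fun x => (monom M (1 + t x • v x) - 1) / t x) l (𝓝 (∑ i, a i * M i)) := by
  have hfactor : ∀ i, Tendsto (fun x => 1 + t x * v x i) l (𝓝 1) := fun i => by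
    simpa using (ht.mul (tendsto_pi_nhds.1 hv i)).const_add 1
  have hdiff : ∀ i, Tendsto (fun x => (1 + t x * v x i - 1) / t x) l (𝓝 (a i)) := fun i =>
    (tendsto_pi_nhds.1 hv i).congr' (by
      filter_upwards [ht0] with x hx
      rw [add_sub_cancel_left, mul_div_cancel_left₀ _ hx])
  simp_rw [mul_comm (a _)]
  exact tendsto_prod_sub_one_div Finset.univ (fun i _ => by simpa using (hfactor i).pow (M i))
    fun i _ => tendsto_pow_sub_one_div (M i) (hfactor i) (hdiff i)

end Monomial

section Orbit

variable {n : ℕ} {M : Fin n → ℕ} {y c : ℕ → Fin n → ℂ}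

theorem eventually_monom_ne_zero
    (hrec : ∀ᶠ j in atTop, y (j + 1) = y j * (1 + monom M (y j) • c j))
    (hy : Tendsto y atTop (𝓝 0)) (hy0 : ∀ j, y j ≠ 0) :
    ∀ᶠ j in atTop, monom M (y j) ≠ 0 := by
  obtain ⟨N, hN⟩ := eventually_atTop.1 hrec
  refine eventually_atTop.2 ⟨N, fun j hj hz => hy0 j ?_⟩
  have hconst : ∀ k, j ≤ k → y j = y k := by
    intro k hk
    induction k, hk using Nat.le_induction with
    | base => rfl
    | succ k hk ih => rw [hN k (hj.trans hk), ← ih, hz, zero_smul, add_zero, mul_one]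
  exact tendsto_nhds_unique (tendsto_const_nhds.congr' (eventually_atTop.2 ⟨j, hconst⟩)) hy

theorem tendsto_natCast_mul_monom {a : Fin n → ℂ} (hM : M ≠ 0)
    (hrec : ∀ᶠ j in atTop, y (j + 1) = y j * (1 + monom M (y j) • c j))
    (hy : Tendsto y atTop (𝓝 0)) (hy0 : ∀ j, y j ≠ 0) (hc : Tendsto c atTop (𝓝 a))
    (ha : ∑ i, a i * M i = -1) :
    Tendsto (fun j : ℕ => (j : ℂ) * monom M (y j)) atTop (𝓝 1) := by
  have hz : Tendsto (fun j => monom M (y j)) atTop (𝓝 0) :=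
    ((continuous_monom M).tendsto' 0 0 (monom_zero hM)).comp hy
  have hz0 := eventually_monom_ne_zero hrec hy hy0
  refine tendsto_natCast_mul_of_tendsto_sub_div_sq hz hz0 ?_
  rw [← ha]
  refine (tendsto_monom_one_add_smul_sub_one_div hz hz0 hc).congr' ?_
  filter_upwards [hrec, hz0] with j hj hzj
  rw [hj, monom_mul, pow_two, ← div_div, ← mul_sub_one, mul_div_cancel_left₀ _ hzj]

theorem isBigO_norm_orbit_apply {a : Fin n → ℂ} {σ : ℝ} (i : Fin n)
    (hrec : ∀ᶠ j in atTop, y (j + 1) = y j * (1 + monom M (y j) • c j))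
    (hz : Tendsto (fun j : ℕ => (j : ℂ) * monom M (y j)) atTop (𝓝 1))
    (hc : Tendsto c atTop (𝓝 a)) (hσa : (a i).re < σ) (hσ : σ ≤ 0) :
    (fun j => ‖y j i‖) =O[atTop] fun j => (j : ℝ) ^ σ := by
  have hζ : Tendsto (fun j : ℕ => (j : ℂ) * (monom M (y j) * c j i)) atTop (𝓝 (a i)) := by
    simpa [mul_assoc] using hz.mul (tendsto_pi_nhds.1 hc i)
  refine isBigO_natCast_rpow_of_le_mul_exp hσ ?_
  filter_upwards [hrec, eventually_norm_one_add_le_exp hζ hσa] with j hj hle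
  refine ⟨norm_nonneg _, ?_⟩
  rw [hj, Pi.mul_apply, norm_mul]
  exact mul_le_mul_of_nonneg_left (by simpa using hle) (norm_nonneg _)

end Orbit

theorem eventually_mem_sectC {z : ℕ → ℂ} (hz : Tendsto (fun j : ℕ => (j : ℂ) * z j) atTop (𝓝 1))
    {ε θ : ℝ} (hε : 0 < ε) (hθ : 0 < θ) : ∀ᶠ j in atTop, z j ∈ sectC ε θ := by
  have harg : Tendsto (fun j : ℕ => |Complex.arg ((j : ℂ) * z j)|) atTop (𝓝 0) := by
    simpa using ((Complex.continuousAt_arg (by simp)).tendsto.comp hz).abs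
  have hnorm : Tendsto (fun j => ‖z j‖) atTop (𝓝 0) :=
    tendsto_zero_iff_norm_tendsto_zero.1 (tendsto_zero_of_tendsto_natCast_mul hz)
  filter_upwards [hz.eventually_ne one_ne_zero, hnorm.eventually_lt_const hε,
    harg.eventually_lt_const hθ, eventually_ge_atTop 1] with j hne hlt harg hj
  refine ⟨right_ne_zero_of_mul hne, hlt, ?_⟩
  rwa [← Complex.ofReal_natCast, Complex.arg_real_mul _ (by positivity)] at harg

theorem converging_orbit_enters_U_general
    {n : ℕ}
    (M : Fin n → ℕ) (hM : M ≠ 0)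
    (a : Fin n → ℂ)
    (A : Fin n → (Fin n → ℂ) → ℂ)
    (hAan : ∀ i, AnalyticAt ℂ (A i) 0) (hA0 : ∀ i, A i 0 = 0)
    (f : (Fin n → ℂ) → (Fin n → ℂ))
    (hf : ∀ᶠ x in 𝓝 (0 : Fin n → ℂ), ∀ i, f x i = x i * (1 + monom M x * (a i + A i x)))
    (hnorm : ∑ i, a i * (M i : ℂ) = -1)
    (d : ℕ)
    (m : Fin n → ℕ) (hm : ∀ i, M i = d * m i)
    (hre : ∀ i, (a i).re < 0)
    (γ : ℝ) (hγ' : ∀ i, (a i).re + γ / (d : ℝ) < 0) :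
    ∀ θ, 0 < θ → θ < Real.pi / 2 →
      ∃ ε₀ > 0, ∀ ε, 0 < ε → ε ≤ ε₀ →
        ∀ x : Fin n → ℂ, (∀ j : ℕ, f^[j] x ≠ 0) →
          Tendsto (fun j => f^[j] x) atTop (𝓝 0) →
          ∃ j₀ : ℕ, ∀ j, j₀ ≤ j → f^[j] x ∈ Uset M m γ ε θ := by
  intro θ hθ _
  refine ⟨1, one_pos, fun ε hε _ x hx hconv => ?_⟩
  set y : ℕ → Fin n → ℂ := fun j => f^[j] x
  set c : ℕ → Fin n → ℂ := fun j i => a i + A i (y j)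
  have hrec : ∀ᶠ j in atTop, y (j + 1) = y j * (1 + monom M (y j) • c j) := by
    filter_upwards [hconv.eventually hf] with j hj
    funext i
    simp [y, c, iterate_succ_apply', hj i]
  have hc : Tendsto c atTop (𝓝 a) := tendsto_pi_nhds.2 fun i => by
    simpa [hA0 i] using ((hAan i).continuousAt.tendsto.comp hconv).const_add (a i)
  have hz := tendsto_natCast_mul_monom hM hrec hconv hx hc hnorm
  have hd0 : d ≠ 0 := by
    rintro rfl
    exact hM (funext fun i => by simp [hm i])
  have hcoord : ∀ i, ∀ᶠ j in atTop, ‖y j i‖ < ‖monom m (y j)‖ ^ γ := by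
    intro i
    obtain ⟨σ, hσa, hσ⟩ :=
      exists_between (lt_min (hre i) (by linarith [hγ' i] : (a i).re < -(γ / d)))
    simp_rw [norm_monom_rpow hm hd0]
    exact eventually_lt_rpow_of_isBigO
      (isBigO_norm_orbit_apply i hrec hz hc hσa (hσ.trans_le (min_le_left _ _)).le)
      (by simpa using hz.norm) (hσ.trans_le (min_le_right _ _))
  refine eventually_atTop.1 ?_
  filter_upwards [eventually_mem_sectC hz hε hθ, eventually_all.2 hcoord] with j h1 h2
  exact ⟨h1, h2⟩

theorem converging_orbit_enters_U
    {n : ℕ} [NeZero n]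
    (M : Fin n → ℕ) (hM : M ≠ 0)
    (a : Fin n → ℂ) (ha : ∀ i, a i ≠ 0)
    (A : Fin n → (Fin n → ℂ) → ℂ)
    (hAan : ∀ i, AnalyticAt ℂ (A i) 0) (hA0 : ∀ i, A i 0 = 0)
    (f : (Fin n → ℂ) → (Fin n → ℂ))
    (hf : ∀ᶠ x in 𝓝 (0 : Fin n → ℂ), ∀ i, f x i = x i * (1 + monom M x * (a i + A i x)))
    (hnorm : ∑ i, a i * (M i : ℂ) = -1)
    (d : ℕ) (hd : d = Finset.univ.gcd M)
    (m : Fin n → ℕ) (hm : ∀ i, M i = d * m i)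
    (hre : ∀ i, (a i).re < 0)
    (γ : ℝ) (hγ : 0 < γ) (hγ' : ∀ i, (a i).re + γ / (d : ℝ) < 0) :
    ∀ θ, 0 < θ → θ < Real.pi / 2 →
      ∃ ε₀ > 0, ∀ ε, 0 < ε → ε ≤ ε₀ →
        ∀ x : Fin n → ℂ, (∀ j : ℕ, f^[j] x ≠ 0) →
          Tendsto (fun j => f^[j] x) atTop (𝓝 0) →
          ∃ j₀ : ℕ, ∀ j, j₀ ≤ j → f^[j] x ∈ Uset M m γ ε θ :=
  converging_orbit_enters_U_general M hM a A hAan hA0 f hf hnorm d m hm hre γ hγ'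
end
end

section
/- Lemma (invariance of V and derivative estimate). If ε, θ and r are small enough, then F̃(V(ε,θ,r)) ⊆ V(ε,θ,r), and there exists a constant K' > 0 such that |∂h̃/∂z (z,w)| < K'·|z|^{−1−γ/d} for every (z,w) ∈ V(ε,θ,r). -/
/-!
For `0 < θ < π/2` the condition `|arg z| < θ` on `z ≠ 0` is linear in `z`: it reads
`|Im z| < tan θ · Re z`, so the sector is a convex cone. Once `ε` is small,
`|h̃| < min(1/2, tan θ/2)` on `V(ε,θ,r)`, hence `1 + h̃` lies in the sector; so does `z + 1 + h̃`,
and since `z` and `1 + h̃` make an acute angle, `|z + 1 + h̃| > |z|`. As `w` is unchanged and the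
conditions on it only weaken as `|z|` grows, `F̃` maps `V(ε,θ,r)` into itself.

For the derivative, a disc of radius `c|z|` around a point `z` of the sector `|arg z| < θ ≤ θ₁/2`
stays in the sector `|arg z| < θ₁` and outside the disc of radius `|z|/2`, so for `r` small it
lies in `V(ε₁,θ₁,r₁)`, where `|h̃| ≤ K (|z|/2)^{-γ/d}`. Cauchy's estimate on that disc gives
`|∂h̃/∂z| ≤ K (|z|/2)^{-γ/d} / (c|z|)`.
-/

noncomputable section

open Complex Filter Topology Set Function

open Metric

open scoped Real

/-- The domain `V(ε,θ,r)` of the approximate Fatou coordinates. -/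
def Vset {n : ℕ} [NeZero n] (N : Matrix (Fin n) (Fin n) ℤ) (a : Fin n → ℂ)
    (γ : ℝ) (d : ℕ) (ε θ r : ℝ) : Set (Fin n → ℂ) :=
  {y | ε⁻¹ < ‖y 0‖ ∧ |Complex.arg (y 0)| < θ ∧
    ∀ i, ‖∏ j ∈ Finset.univ.erase (0 : Fin n), y j ^ (N i j).toNat‖ <
      r * ‖y 0‖ ^ (-(γ / (d : ℝ)) - (a i).re) *
        ‖∏ j ∈ Finset.univ.erase (0 : Fin n), y j ^ (-(N i j)).toNat‖}

/-- The sector `|arg z| < arctan t`, described without `arg`. -/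
def tanSector (t : ℝ) : Set ℂ := {z | |z.im| < t * z.re}

section tanSector

variable {t S : ℝ} {z w : ℂ}

theorem re_pos_of_mem_tanSector (ht : 0 ≤ t) (hz : z ∈ tanSector t) : 0 < z.re :=
  pos_of_mul_pos_right ((abs_nonneg _).trans_lt hz) ht

theorem tanSector_mono (ht : 0 ≤ t) (htS : t ≤ S) : tanSector t ⊆ tanSector S := fun _ hz =>
  hz.trans_le (mul_le_mul_of_nonneg_right htS (re_pos_of_mem_tanSector ht hz).le)

theorem add_mem_tanSector (hz : z ∈ tanSector t) (hw : w ∈ tanSector t) :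
    z + w ∈ tanSector t :=
  calc |(z + w).im| ≤ |z.im| + |w.im| := by rw [add_im]; exact abs_add_le _ _
    _ < t * (z + w).re := by rw [add_re, mul_add]; exact add_lt_add hz hw

theorem one_add_mem_tanSector {u : ℂ} (hu : ‖u‖ ≤ 1 / 2) (hut : ‖u‖ < t / 2) :
    1 + u ∈ tanSector t := by
  have hre : 1 / 2 ≤ (1 + u).re := by
    rw [add_re, one_re]; linarith [neg_abs_le u.re, abs_re_le_norm u]
  have ht : 0 < t := by linarith [norm_nonneg u]
  calc |(1 + u).im| = |u.im| := by rw [add_im, one_im, zero_add]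
    _ ≤ ‖u‖ := abs_im_le_norm u
    _ < t * (1 / 2) := by linarith
    _ ≤ t * (1 + u).re := mul_le_mul_of_nonneg_left hre ht.le

theorem abs_arg_lt_iff_mem_tanSector {θ : ℝ} (hz : z ≠ 0) (hθ : 0 < θ) (hθ' : θ < π / 2) :
    |arg z| < θ ↔ z ∈ tanSector (Real.tan θ) := by
  rcases lt_or_ge 0 z.re with hre | hre
  · have harg := abs_lt.mp (abs_arg_lt_pi_div_two_iff.mpr (Or.inl hre))
    have hmono {x y : ℝ} (hx : |x| < π / 2) (hy : |y| < π / 2) :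
        x < y ↔ Real.tan x < Real.tan y :=
      (Real.strictMonoOn_tan.lt_iff_lt (abs_lt.mp hx) (abs_lt.mp hy)).symm
    have hθabs : |θ| < π / 2 := by rwa [abs_of_pos hθ]
    rw [tanSector, mem_ofPred_eq, abs_lt, abs_lt, hmono (by rwa [abs_neg]) (abs_lt.mpr harg),
      hmono (abs_lt.mpr harg) hθabs, Real.tan_neg, tan_arg, lt_div_iff₀ hre, div_lt_iff₀ hre,
      neg_mul]
  · have harg : π / 2 ≤ |arg z| := by
      by_contra! h
      rcases abs_arg_lt_pi_div_two_iff.mp h with h | h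
      exacts [hre.not_gt h, hz h]
    have hθpos : 0 < Real.tan θ := Real.tan_pos_of_pos_of_lt_pi_div_two hθ hθ'
    refine iff_of_false (by linarith) fun h => ?_
    linarith [re_pos_of_mem_tanSector hθpos.le h]

/-- `tanSector 1` is the sector `|arg z| < π/4`, so `z` and `w` make an acute angle. -/
theorem norm_lt_norm_add_of_mem_tanSector_one (hz : z ∈ tanSector 1) (hw : w ∈ tanSector 1) :
    ‖z‖ < ‖z + w‖ := by
  have hzre := re_pos_of_mem_tanSector zero_le_one hz
  have hwre := re_pos_of_mem_tanSector zero_le_one hw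
  rw [tanSector, mem_ofPred_eq, one_mul] at hz hw
  have him : |z.im * w.im| < z.re * w.re := by
    rw [abs_mul]; exact mul_lt_mul'' hz hw (abs_nonneg _) (abs_nonneg _)
  refine lt_of_pow_lt_pow_left₀ 2 (norm_nonneg _) ?_
  rw [Complex.sq_norm, Complex.sq_norm, normSq_apply, normSq_apply, add_re, add_im]
  nlinarith [neg_abs_le (z.im * w.im), sq_nonneg w.re, sq_nonneg w.im]

theorem exists_closedBall_subset_tanSector (ht : 0 ≤ t) (htS : t < S) :
    ∃ c, 0 < c ∧ c ≤ 1 / 2 ∧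
      ∀ z ∈ tanSector t, closedBall z (c * ‖z‖) ⊆ tanSector S := by
  have hS : 0 ≤ S := ht.trans htS.le
  set c := min (1 / 2) ((S - t) / ((1 + S) * (1 + t)))
  have hden : 0 < (1 + S) * (1 + t) := by positivity
  have hc : 0 < c := lt_min one_half_pos (div_pos (by linarith) hden)
  have hcS : c * ((1 + S) * (1 + t)) ≤ S - t :=
    (le_div_iff₀ hden).mp (min_le_right _ _)
  refine ⟨c, hc, min_le_left _ _, fun z hz w hw => ?_⟩
  have hz' : |z.im| < t * z.re := hz
  have hre := re_pos_of_mem_tanSector ht hz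
  have hnorm : ‖z‖ ≤ (1 + t) * z.re := by
    linarith [norm_le_abs_re_add_abs_im z, abs_of_pos hre]
  have hρ : (1 + S) * (c * ‖z‖) ≤ (S - t) * z.re :=
    calc (1 + S) * (c * ‖z‖) ≤ (1 + S) * (c * ((1 + t) * z.re)) := by gcongr
      _ = c * ((1 + S) * (1 + t)) * z.re := by ring
      _ ≤ (S - t) * z.re := by gcongr
  rw [mem_closedBall, dist_eq] at hw
  have hre' := abs_le.mp ((abs_re_le_norm (w - z)).trans hw)
  have him' := abs_le.mp ((abs_im_le_norm (w - z)).trans hw)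
  rw [sub_re] at hre'
  rw [sub_im] at him'
  have hSre : S * (z.re - c * ‖z‖) ≤ S * w.re := mul_le_mul_of_nonneg_left (by linarith) hS
  show |w.im| < S * w.re
  rw [abs_lt]
  constructor <;> linarith [abs_lt.mp hz']

end tanSector

theorem half_norm_le_of_mem_closedBall {E : Type*} [SeminormedAddCommGroup E] {z w : E} {c : ℝ}
    (hc : c ≤ 1 / 2) (hw : w ∈ closedBall z (c * ‖z‖)) : ‖z‖ / 2 ≤ ‖w‖ := by
  rw [mem_closedBall, dist_eq_norm, norm_sub_rev] at hw
  linarith [norm_sub_norm_le z w, mul_le_mul_of_nonneg_right hc (norm_nonneg z)]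

theorem mul_rpow_neg_lt {K β δ ε x : ℝ} (hK : 0 < K) (hβ : 0 < β) (hδ : 0 < δ)
    (hε : 0 < ε) (hεδ : ε ≤ (δ / K) ^ β⁻¹) (hx : ε⁻¹ < x) : K * x ^ (-β) < δ := by
  have hx0 : 0 < x := (inv_pos.mpr hε).trans hx
  have hxε : x⁻¹ < ε := inv_lt_of_inv_lt₀ hε hx
  calc K * x ^ (-β) = K * x⁻¹ ^ β := by rw [Real.rpow_neg hx0.le, Real.inv_rpow hx0.le]
    _ < K * ((δ / K) ^ β⁻¹) ^ β := by
      gcongr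
      exact hxε.trans_le hεδ
    _ = δ := by
      rw [← Real.rpow_mul (by positivity), inv_mul_cancel₀ hβ.ne', Real.rpow_one]
      field_simp

theorem exists_pos_le_mul_inv_two_rpow {ι : Type*} [Finite ι] [Nonempty ι] {e : ι → ℝ}
    (he : ∀ i, 0 ≤ e i) {r : ℝ} (hr : 0 < r) :
    ∃ r₀, 0 < r₀ ∧ r₀ ≤ r ∧ ∀ i, r₀ ≤ r * 2⁻¹ ^ e i := by
  obtain ⟨i₀, hi₀⟩ := Finite.exists_min fun i => (2⁻¹ : ℝ) ^ e i
  refine ⟨r * 2⁻¹ ^ e i₀, by positivity, ?_, fun i => mul_le_mul_of_nonneg_left (hi₀ i) hr.le⟩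
  exact mul_le_of_le_one_right hr.le (Real.rpow_le_one (by norm_num) (by norm_num) (he i₀))

theorem norm_deriv_comp_update_le {ι : Type*} [Fintype ι] [DecidableEq ι] {i₀ : ι}
    {U : Set (ι → ℂ)} {h : (ι → ℂ) → ℂ} (hdiff : DifferentiableOn ℂ h U) {K β c : ℝ}
    (hK : 0 ≤ K) (hβ : 0 ≤ β) (hc : 0 < c) (hc' : c ≤ 1 / 2)
    (hbound : ∀ y ∈ U, ‖h y‖ < K * ‖y i₀‖ ^ (-β)) {y : ι → ℂ} (hy : y i₀ ≠ 0)
    (hball : ∀ w ∈ closedBall (y i₀) (c * ‖y i₀‖), update y i₀ w ∈ U) :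
    ‖deriv (fun z => h (update y i₀ z)) (y i₀)‖ ≤ K * 2 ^ β / c * ‖y i₀‖ ^ (-1 - β) := by
  set x := ‖y i₀‖
  have hx : 0 < x := norm_pos_iff.mpr hy
  have hupdate : DifferentiableOn ℂ (update y i₀) (closedBall (y i₀) (c * x)) := fun z _ =>
    (hasFDerivAt_update y z).differentiableAt.differentiableWithinAt
  have hdc : DiffContOnCl ℂ (fun z => h (update y i₀ z)) (ball (y i₀) (c * x)) :=
    (hdiff.comp hupdate hball).diffContOnCl_ball subset_rfl
  have hsphere :
      ∀ w ∈ sphere (y i₀) (c * x), ‖h (update y i₀ w)‖ ≤ K * (x / 2) ^ (-β) := by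
    intro w hw
    have hw' := sphere_subset_closedBall hw
    have hwx := half_norm_le_of_mem_closedBall hc' hw'
    calc ‖h (update y i₀ w)‖ ≤ K * ‖w‖ ^ (-β) := by
          simpa only [update_self] using (hbound _ (hball w hw')).le
      _ ≤ K * (x / 2) ^ (-β) := mul_le_mul_of_nonneg_left
          (Real.rpow_le_rpow_of_nonpos (by positivity) hwx (neg_nonpos.mpr hβ)) hK
  calc ‖deriv (fun z => h (update y i₀ z)) (y i₀)‖ ≤ K * (x / 2) ^ (-β) / (c * x) :=
        norm_deriv_le_of_forall_mem_sphere_norm_le (by positivity) hdc hsphere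
    _ = K * 2 ^ β / c * x ^ (-1 - β) := by
        rw [Real.div_rpow hx.le zero_le_two, Real.rpow_neg zero_le_two,
          show -1 - β = -β - 1 by ring, Real.rpow_sub_one hx.ne']
        field_simp

section Vset

variable {n : ℕ} [NeZero n] {N : Matrix (Fin n) (Fin n) ℤ} {a : Fin n → ℂ} {γ : ℝ}
  {d : ℕ} {ε θ r ε' θ' r' : ℝ} {y : Fin n → ℂ}

theorem Vset_mono (hε : 0 < ε) (hεε' : ε ≤ ε') (hθθ' : θ ≤ θ') (hrr' : r ≤ r') :
    Vset N a γ d ε θ r ⊆ Vset N a γ d ε' θ' r' := by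
  rintro y ⟨hnorm, harg, hw⟩
  exact ⟨(inv_anti₀ hε hεε').trans_lt hnorm, harg.trans_le hθθ',
    fun i => (hw i).trans_le (by gcongr)⟩

theorem update_mem_Vset (hy : y ∈ Vset N a γ d ε θ r) {v : ℂ} (hv : ε'⁻¹ < ‖v‖)
    (harg : |arg v| < θ')
    (hr : ∀ i, r * ‖y 0‖ ^ (-(γ / d) - (a i).re) ≤ r' * ‖v‖ ^ (-(γ / d) - (a i).re)) :
    update y 0 v ∈ Vset N a γ d ε' θ' r' := by
  have hprod (k : Fin n → ℕ) : ∏ j ∈ Finset.univ.erase 0, update y 0 v j ^ k j =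
      ∏ j ∈ Finset.univ.erase 0, y j ^ k j :=
    Finset.prod_congr rfl fun j hj => by rw [update_of_ne (Finset.ne_of_mem_erase hj)]
  refine ⟨by rwa [update_self], by rwa [update_self], fun i => ?_⟩
  rw [update_self, hprod, hprod]
  exact (hy.2.2 i).trans_le (mul_le_mul_of_nonneg_right (hr i) (norm_nonneg _))

theorem ne_zero_of_mem_Vset (hε : 0 < ε) (hy : y ∈ Vset N a γ d ε θ r) : y 0 ≠ 0 :=
  norm_pos_iff.mp ((inv_pos.mpr hε).trans hy.1)

theorem mem_tanSector_of_mem_Vset (hε : 0 < ε) (hθ : 0 < θ) (hθπ : θ < π / 2)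
    (hy : y ∈ Vset N a γ d ε θ r) : y 0 ∈ tanSector (Real.tan θ) :=
  (abs_arg_lt_iff_mem_tanSector (ne_zero_of_mem_Vset hε hy) hθ hθπ).mp hy.2.1

theorem update_add_mem_Vset (hε : 0 < ε) (hθ : 0 < θ) (hθπ4 : θ ≤ π / 4) (hr : 0 ≤ r)
    (he : ∀ i, 0 ≤ -(γ / d) - (a i).re) (hy : y ∈ Vset N a γ d ε θ r) {u : ℂ}
    (hu : ‖u‖ ≤ 1 / 2) (hut : ‖u‖ < Real.tan θ / 2) :
    update y 0 (y 0 + 1 + u) ∈ Vset N a γ d ε θ r := by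
  have hθπ2 : θ < π / 2 := by linarith [Real.pi_pos]
  have ht : 0 ≤ Real.tan θ := (Real.tan_pos_of_pos_of_lt_pi_div_two hθ hθπ2).le
  have ht1 : Real.tan θ ≤ 1 := by
    rw [← Real.tan_pi_div_four]
    have := Real.pi_pos
    exact Real.strictMonoOn_tan.monotoneOn ⟨by linarith, hθπ2⟩ ⟨by linarith, by linarith⟩ hθπ4
  have hz := mem_tanSector_of_mem_Vset hε hθ hθπ2 hy
  have hu' := one_add_mem_tanSector hu hut
  have hgrow : ‖y 0‖ < ‖y 0 + 1 + u‖ := by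
    rw [add_assoc]
    exact norm_lt_norm_add_of_mem_tanSector_one (tanSector_mono ht ht1 hz)
      (tanSector_mono ht ht1 hu')
  refine update_mem_Vset hy (hy.1.trans hgrow) ?_ fun i =>
    mul_le_mul_of_nonneg_left (Real.rpow_le_rpow (norm_nonneg _) hgrow.le (he i)) hr
  rw [abs_arg_lt_iff_mem_tanSector (norm_pos_iff.mp ((norm_nonneg _).trans_lt hgrow)) hθ hθπ2,
    add_assoc]
  exact add_mem_tanSector hz hu'

theorem update_mem_Vset_of_mem_closedBall (hε : 0 < ε) (hεε' : 2 * ε ≤ ε') (hθ : 0 < θ)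
    (hθθ' : θ < θ') (hθ'π : θ' < π / 2) (hr' : 0 ≤ r')
    (he : ∀ i, 0 ≤ -(γ / d) - (a i).re)
    (hrr' : ∀ i, r ≤ r' * 2⁻¹ ^ (-(γ / d) - (a i).re)) {c : ℝ} (hc : c ≤ 1 / 2)
    (hball :
      ∀ z ∈ tanSector (Real.tan θ), closedBall z (c * ‖z‖) ⊆ tanSector (Real.tan θ'))
    (hy : y ∈ Vset N a γ d ε θ r) :
    ∀ w ∈ closedBall (y 0) (c * ‖y 0‖), update y 0 w ∈ Vset N a γ d ε' θ' r' := by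
  intro w hw
  have hwy := half_norm_le_of_mem_closedBall hc hw
  have hy₀ : ε⁻¹ < ‖y 0‖ := hy.1
  have hw₀ : ε'⁻¹ < ‖w‖ :=
    calc ε'⁻¹ ≤ (2 * ε)⁻¹ := inv_anti₀ (by positivity) hεε'
      _ = ε⁻¹ / 2 := by rw [mul_inv, inv_mul_eq_div]
      _ < ‖w‖ := by linarith
  have hwS := hball _ (mem_tanSector_of_mem_Vset hε hθ (hθθ'.trans hθ'π) hy) hw
  refine update_mem_Vset hy hw₀ ?_ fun i => ?_
  · exact (abs_arg_lt_iff_mem_tanSector (norm_pos_iff.mp ((inv_pos.mpr (by linarith)).trans hw₀))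
      (hθ.trans hθθ') hθ'π).mpr hwS
  · calc r * ‖y 0‖ ^ (-(γ / d) - (a i).re)
        ≤ r' * 2⁻¹ ^ (-(γ / d) - (a i).re) * ‖y 0‖ ^ (-(γ / d) - (a i).re) := by
          gcongr
          exact hrr' i
      _ = r' * (‖y 0‖ / 2) ^ (-(γ / d) - (a i).re) := by
        rw [mul_assoc, ← Real.mul_rpow (by norm_num) (norm_nonneg _), inv_mul_eq_div]
      _ ≤ r' * ‖w‖ ^ (-(γ / d) - (a i).re) := by
        gcongr
        exact he i

end Vset

theorem V_invariance_and_derivative_estimate_general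
    {n : ℕ} [NeZero n]
    (Nmat : Matrix (Fin n) (Fin n) ℤ) (a : Fin n → ℂ) (γ : ℝ) (d : ℕ)
    (hd : 1 ≤ d) (hγ : 0 < γ)
    (hγ' : ∀ i, (a i).re + γ / (d : ℝ) < 0)
    (K : ℝ) (hK : 0 < K)
    (θ₁ ε₁ r₁ : ℝ) (hθ₁' : θ₁ < Real.pi / 2) (hε₁ : 0 < ε₁) (hr₁ : 0 < r₁)
    (h : (Fin n → ℂ) → ℂ)
    (hdiff : DifferentiableOn ℂ h (Vset Nmat a γ d ε₁ θ₁ r₁))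
    (hbound : ∀ y ∈ Vset Nmat a γ d ε₁ θ₁ r₁,
      ‖h y‖ < K * ‖y 0‖ ^ (-(γ / (d : ℝ)))) :
    ∀ θ, 0 < θ → θ ≤ θ₁ / 2 →
      ∃ ε₀, 0 < ε₀ ∧ ε₀ ≤ ε₁ ∧ ∃ K' > 0, ∀ ε, 0 < ε → ε ≤ ε₀ →
        ∃ r₀, 0 < r₀ ∧ r₀ ≤ r₁ ∧ ∀ r, 0 < r → r ≤ r₀ →
          (∀ y ∈ Vset Nmat a γ d ε θ r,
            Function.update y 0 (y 0 + 1 + h y) ∈ Vset Nmat a γ d ε θ r) ∧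
          (∀ y ∈ Vset Nmat a γ d ε θ r,
            ‖deriv (fun z => h (Function.update y 0 z)) (y 0)‖ <
              K' * ‖y 0‖ ^ (-1 - γ / (d : ℝ))) := by
  intro θ hθ hθθ₁
  have hβ : 0 < γ / d := div_pos hγ (by exact_mod_cast hd)
  have he : ∀ i, 0 ≤ -(γ / d) - (a i).re := fun i => by linarith [hγ' i]
  have ht : 0 < Real.tan θ := Real.tan_pos_of_pos_of_lt_pi_div_two hθ (by linarith)
  obtain ⟨c, hc, hc', hball⟩ := exists_closedBall_subset_tanSector ht.le
    (Real.tan_lt_tan_of_nonneg_of_lt_pi_div_two hθ.le hθ₁' (by linarith))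
  set δ := min (1 / 2) (Real.tan θ / 2)
  have hδ : 0 < δ := by positivity
  refine ⟨min (ε₁ / 2) ((δ / K) ^ (γ / d)⁻¹), by positivity,
    (min_le_left _ _).trans (by linarith), 2 * (K * 2 ^ (γ / d) / c), by positivity,
    fun ε hε hεε₀ => ?_⟩
  have hεε₁ : ε ≤ ε₁ / 2 := hεε₀.trans (min_le_left _ _)
  obtain ⟨r₀, hr₀, hr₀r₁, hr₀e⟩ := exists_pos_le_mul_inv_two_rpow he hr₁
  refine ⟨r₀, hr₀, hr₀r₁, fun r hr hrr₀ => ⟨fun y hy => ?_, fun y hy => ?_⟩⟩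
  · have hy₁ :=
      Vset_mono (ε' := ε₁) (θ' := θ₁) hε (by linarith) (by linarith) (hrr₀.trans hr₀r₁) hy
    have hhy : ‖h y‖ < δ := (hbound y hy₁).trans
      (mul_rpow_neg_lt hK hβ hδ hε (hεε₀.trans (min_le_right _ _)) hy.1)
    exact update_add_mem_Vset hε hθ (by linarith) hr.le he hy
      (hhy.le.trans (min_le_left _ _)) (hhy.trans_le (min_le_right _ _))
  · have hy₀ := ne_zero_of_mem_Vset hε hy
    have hdisc := update_mem_Vset_of_mem_closedBall (ε' := ε₁) hε (by linarith) hθ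
      (by linarith) hθ₁' hr₁.le he (fun i => hrr₀.trans (hr₀e i)) hc' hball hy
    calc _ ≤ K * 2 ^ (γ / d) / c * ‖y 0‖ ^ (-1 - γ / d) :=
          norm_deriv_comp_update_le hdiff hK.le hβ.le hc hc' hbound hy₀ hdisc
      _ < _ := by
          rw [mul_assoc 2]
          exact lt_two_mul_self
            (mul_pos (by positivity) (Real.rpow_pos_of_pos (norm_pos_iff.mpr hy₀) _))

theorem V_invariance_and_derivative_estimate
    {n : ℕ} [NeZero n]
    (Nmat : Matrix (Fin n) (Fin n) ℤ) (a : Fin n → ℂ) (γ : ℝ) (d : ℕ)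
    (hd : 1 ≤ d) (hγ : 0 < γ)
    (ha : ∀ i, a i ≠ 0) (hre : ∀ i, (a i).re < 0)
    (hγ' : ∀ i, (a i).re + γ / (d : ℝ) < 0)
    (K : ℝ) (hK : 0 < K)
    (θ₁ ε₁ r₁ : ℝ) (hθ₁ : 0 < θ₁) (hθ₁' : θ₁ < Real.pi / 2) (hε₁ : 0 < ε₁) (hr₁ : 0 < r₁)
    (h : (Fin n → ℂ) → ℂ)
    (hdiff : DifferentiableOn ℂ h (Vset Nmat a γ d ε₁ θ₁ r₁))
    (hbound : ∀ y ∈ Vset Nmat a γ d ε₁ θ₁ r₁,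
      ‖h y‖ < K * ‖y 0‖ ^ (-(γ / (d : ℝ)))) :
    ∀ θ, 0 < θ → θ ≤ θ₁ / 2 →
      ∃ ε₀, 0 < ε₀ ∧ ε₀ ≤ ε₁ ∧ ∃ K' > 0, ∀ ε, 0 < ε → ε ≤ ε₀ →
        ∃ r₀, 0 < r₀ ∧ r₀ ≤ r₁ ∧ ∀ r, 0 < r → r ≤ r₀ →
          (∀ y ∈ Vset Nmat a γ d ε θ r,
            Function.update y 0 (y 0 + 1 + h y) ∈ Vset Nmat a γ d ε θ r) ∧
          (∀ y ∈ Vset Nmat a γ d ε θ r,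
            ‖deriv (fun z => h (Function.update y 0 z)) (y 0)‖ <
              K' * ‖y 0‖ ^ (-1 - γ / (d : ℝ))) :=
  V_invariance_and_derivative_estimate_general Nmat a γ d hd hγ hγ' K hK θ₁ ε₁ r₁ hθ₁' hε₁ hr₁ h
    hdiff hbound
end
end

section
/- Asymptotics of the Fatou coordinate. Under the hypotheses of the one-dimensional Fatou coordinate lemma, the limit function β_w : V_w → ℂ satisfies lim_{z→∞, z∈V_w} β_w(z)/z = 1. -/
/-!
Asymptotics of the Fatou coordinate: under the hypotheses of the one-dimensional
Fatou coordinate lemma, the limit `β_w` satisfies `β_w(z)/z → 1` as `z → ∞` in `V_w`.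
-/

noncomputable section

open Complex Filter Topology Set Function Bornology

/-- The fiber domain `V_w = {z ∈ ℂ : R < |z|, |arg z| < θ}`. -/
def Vfiber (R θ : ℝ) : Set ℂ := {z | R < ‖z‖ ∧ |Complex.arg z| < θ}

/-!
Proof idea: write `f^[j] z = z + j + ∑_{k<j} h (f^[k] z)`. Since `‖f^[k] z‖ ≥ ‖z‖ + k/2`, the
chain rule bounds `(f^[k])'` uniformly by `exp (K' ∑ (R + k/2)^(-1-s))`, and the mean value
theorem makes `z ↦ f^[j] z - z` Lipschitz with constant `O(a^(-s/2))`, uniformly in `j`, on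
segments staying outside the disc of radius `a`. Passing to the limit, so is `β - id`. In a
sector of opening less than `π` a map whose Lipschitz constant at distance `a` tends to `0` is
`o(z)`: split `[p, z]` at a point a small fixed fraction of the way from `p` to `z`.
-/

theorem summable_add_half_rpow {R e : ℝ} (hR : 0 < R) (he : 0 < e) :
    Summable fun k : ℕ => (R + k / 2) ^ (-1 - e) := by
  have h := ((Real.summable_one_div_nat_add_rpow (2 * R) (1 + e)).2 (by linarith)).mul_left
    ((2 : ℝ) ^ (1 + e))
  refine h.congr fun k => ?_
  have hk : 0 < (k : ℝ) + 2 * R := by positivity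
  rw [abs_of_pos hk, show R + (k : ℝ) / 2 = ((k : ℝ) + 2 * R) / 2 by ring,
    Real.div_rpow hk.le zero_le_two, show (-1 - e) = -(1 + e) by ring, Real.rpow_neg hk.le,
    Real.rpow_neg zero_le_two]
  field_simp

theorem sum_add_half_rpow_le {R a s : ℝ} (hR : 0 < R) (ha : R ≤ a) (hs : 0 < s) (j : ℕ) :
    ∑ k ∈ Finset.range j, (a + k / 2) ^ (-1 - s) ≤
      a ^ (-(s / 2)) * ∑' k : ℕ, (R + k / 2) ^ (-1 - s / 2) := by
  have ha0 : 0 < a := hR.trans_le ha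
  calc ∑ k ∈ Finset.range j, (a + k / 2) ^ (-1 - s)
      ≤ ∑ k ∈ Finset.range j, a ^ (-(s / 2)) * (R + k / 2) ^ (-1 - s / 2) := by
        gcongr with k
        rw [show (-1 - s) = -(s / 2) + (-1 - s / 2) by ring, Real.rpow_add (by positivity)]
        gcongr ?_ * ?_
        · exact Real.rpow_le_rpow_of_nonpos ha0 (by linarith [k.cast_nonneg (α := ℝ)]) (by linarith)
        · exact Real.rpow_le_rpow_of_nonpos (by positivity) (by linarith) (by linarith)
    _ ≤ a ^ (-(s / 2)) * ∑' k : ℕ, (R + k / 2) ^ (-1 - s / 2) := by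
        rw [← Finset.mul_sum]
        gcongr
        exact (summable_add_half_rpow hR (half_pos hs)).sum_le_tsum _ fun k _ => by positivity

structure IsPerturbedTranslation (f h : ℂ → ℂ) (V : Set ℂ) (R s K' : ℝ) : Prop where
  isOpen : IsOpen V
  mapsTo : MapsTo f V V
  eq_add_one_add : ∀ z ∈ V, f z = z + 1 + h z
  differentiableAt : ∀ z ∈ V, DifferentiableAt ℂ h z
  norm_deriv_le : ∀ z ∈ V, ‖deriv h z‖ ≤ K' * ‖z‖ ^ (-1 - s)
  norm_add_half_lt : ∀ z ∈ V, ‖z‖ + 1 / 2 < ‖f z‖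
  lt_norm : ∀ z ∈ V, R < ‖z‖

namespace IsPerturbedTranslation

variable {f h : ℂ → ℂ} {V : Set ℂ} {R s K' : ℝ}

theorem add_half_le_norm_iterate (hf : IsPerturbedTranslation f h V R s K') {z : ℂ} (hz : z ∈ V)
    (k : ℕ) : ‖z‖ + k / 2 ≤ ‖f^[k] z‖ := by
  induction k with
  | zero => simp
  | succ k ih =>
    rw [iterate_succ_apply']
    have := hf.norm_add_half_lt _ (hf.mapsTo.iterate k hz)
    push_cast
    linarith

theorem iterate_eq_add_sum (hf : IsPerturbedTranslation f h V R s K') {z : ℂ} (hz : z ∈ V) (j : ℕ) :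
    f^[j] z = z + j + ∑ k ∈ Finset.range j, h (f^[k] z) := by
  induction j with
  | zero => simp
  | succ j ih =>
    rw [iterate_succ_apply', hf.eq_add_one_add _ (hf.mapsTo.iterate j hz), Finset.sum_range_succ,
      ih]
    push_cast
    ring

theorem hasDerivAt (hf : IsPerturbedTranslation f h V R s K') {z : ℂ} (hz : z ∈ V) :
    HasDerivAt f (1 + deriv h z) z :=
  (((hasDerivAt_id z).add_const 1).add (hf.differentiableAt z hz).hasDerivAt).congr_of_eventuallyEq
    (eventuallyEq_of_mem (hf.isOpen.mem_nhds hz) hf.eq_add_one_add)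

theorem differentiableAt_iterate (hf : IsPerturbedTranslation f h V R s K') {z : ℂ} (hz : z ∈ V)
    (k : ℕ) : DifferentiableAt ℂ f^[k] z := by
  induction k with
  | zero => exact differentiableAt_id
  | succ k ih =>
    rw [iterate_succ']
    exact (hf.hasDerivAt (hf.mapsTo.iterate k hz)).differentiableAt.comp z ih

theorem norm_deriv_le_of_le_norm (hf : IsPerturbedTranslation f h V R s K') (hK' : 0 ≤ K')
    (hs : 0 ≤ s) {z : ℂ} (hz : z ∈ V) {b : ℝ} (hb : 0 < b) (hbz : b ≤ ‖z‖) :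
    ‖deriv h z‖ ≤ K' * b ^ (-1 - s) :=
  (hf.norm_deriv_le z hz).trans <|
    mul_le_mul_of_nonneg_left (Real.rpow_le_rpow_of_nonpos hb hbz (by linarith)) hK'

theorem norm_deriv_iterate_le (hf : IsPerturbedTranslation f h V R s K') (hR : 0 < R)
    (hK' : 0 ≤ K') (hs : 0 ≤ s) {z : ℂ} (hz : z ∈ V) (k : ℕ) :
    ‖deriv f^[k] z‖ ≤ Real.exp (K' * ∑ i ∈ Finset.range k, (R + i / 2) ^ (-1 - s)) := by
  induction k with
  | zero => simp
  | succ k ih =>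
    have hk := hf.mapsTo.iterate k hz
    have hstep : ‖1 + deriv h (f^[k] z)‖ ≤ Real.exp (K' * (R + k / 2) ^ (-1 - s)) :=
      calc ‖1 + deriv h (f^[k] z)‖ ≤ 1 + K' * (R + k / 2) ^ (-1 - s) := by
            grw [norm_add_le, norm_one, hf.norm_deriv_le_of_le_norm hK' hs hk (b := R + k / 2)
              (by positivity) (by linarith [hf.add_half_le_norm_iterate hz k, hf.lt_norm z hz])]
        _ ≤ _ := by linarith [Real.add_one_le_exp (K' * (R + k / 2) ^ (-1 - s))]
    rw [iterate_succ', deriv_comp z (hf.hasDerivAt hk).differentiableAt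
      (hf.differentiableAt_iterate hz k), (hf.hasDerivAt hk).deriv, norm_mul,
      Finset.sum_range_succ, mul_add, Real.exp_add, mul_comm (Real.exp _)]
    gcongr

theorem norm_sub_comp_iterate_le (hf : IsPerturbedTranslation f h V R s K') (hR : 0 < R)
    (hK' : 0 ≤ K') (hs : 0 < s) {z z' : ℂ} (hseg : segment ℝ z' z ⊆ V) {a : ℝ} (ha : 0 < a)
    (hfar : ∀ w ∈ segment ℝ z' z, a ≤ ‖w‖) (k : ℕ) :
    ‖h (f^[k] z) - h (f^[k] z')‖ ≤
      Real.exp (K' * ∑' i : ℕ, (R + i / 2) ^ (-1 - s)) * K' * (a + k / 2) ^ (-1 - s) *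
        ‖z - z'‖ := by
  refine (convex_segment z' z).norm_image_sub_le_of_norm_hasDerivWithin_le
    (f := h ∘ f^[k]) (f' := fun w => deriv h (f^[k] w) * deriv f^[k] w) (fun w hw => ?_)
    (fun w hw => ?_) (left_mem_segment ℝ z' z) (right_mem_segment ℝ z' z)
  · have hk := hf.mapsTo.iterate k (hseg hw)
    exact ((hf.differentiableAt _ hk).hasDerivAt.comp w
      (hf.differentiableAt_iterate (hseg hw) k).hasDerivAt).hasDerivWithinAt
  · have hk := hf.mapsTo.iterate k (hseg hw)
    have hh := hf.norm_deriv_le_of_le_norm hK' hs.le hk (b := a + k / 2) (by positivity)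
      (by linarith [hf.add_half_le_norm_iterate (hseg hw) k, hfar w hw])
    have hfk := (hf.norm_deriv_iterate_le hR hK' hs.le (hseg hw) k).trans <| Real.exp_le_exp.2 <|
      mul_le_mul_of_nonneg_left
        ((summable_add_half_rpow hR hs).sum_le_tsum _ fun i _ => by positivity) hK'
    exact (norm_mul _ _).trans_le
      ((mul_le_mul hh hfk (norm_nonneg _) (by positivity)).trans_eq (by ring))

theorem iterate_sub_iterate_sub (hf : IsPerturbedTranslation f h V R s K') {z z' : ℂ} (hz : z ∈ V)
    (hz' : z' ∈ V) (j : ℕ) :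
    f^[j] z - f^[j] z' - (z - z') = ∑ k ∈ Finset.range j, (h (f^[k] z) - h (f^[k] z')) := by
  rw [hf.iterate_eq_add_sum hz, hf.iterate_eq_add_sum hz', Finset.sum_sub_distrib]
  ring

theorem exists_norm_sub_sub_le (hf : IsPerturbedTranslation f h V R s K') (hR : 0 < R)
    (hK' : 0 ≤ K') (hs : 0 < s) {β : ℂ → ℂ} {p : ℂ}
    (hβ : ∀ z ∈ V, Tendsto (fun j => f^[j] z - f^[j] p) atTop (𝓝 (β z))) :
    ∃ C, ∀ a, R ≤ a → ∀ z z', segment ℝ z' z ⊆ V → (∀ w ∈ segment ℝ z' z, a ≤ ‖w‖) →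
      ‖β z - z - (β z' - z')‖ ≤ C * a ^ (-(s / 2)) * ‖z - z'‖ := by
  set M := Real.exp (K' * ∑' i : ℕ, (R + i / 2) ^ (-1 - s))
  refine ⟨M * K' * ∑' k : ℕ, (R + k / 2) ^ (-1 - s / 2), fun a ha z z' hseg hfar => ?_⟩
  have hz := hseg (right_mem_segment ℝ z' z)
  have hz' := hseg (left_mem_segment ℝ z' z)
  have hlim : Tendsto (fun j => f^[j] z - f^[j] z' - (z - z')) atTop
      (𝓝 (β z - z - (β z' - z'))) := by
    convert ((hβ z hz).sub (hβ z' hz')).sub_const (z - z') using 2 <;> ring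
  refine le_of_tendsto hlim.norm (Eventually.of_forall fun j => ?_)
  rw [hf.iterate_sub_iterate_sub hz hz']
  calc ‖∑ k ∈ Finset.range j, (h (f^[k] z) - h (f^[k] z'))‖
      ≤ ∑ k ∈ Finset.range j, M * K' * (a + k / 2) ^ (-1 - s) * ‖z - z'‖ :=
        (norm_sum_le _ _).trans <| Finset.sum_le_sum fun k _ =>
          hf.norm_sub_comp_iterate_le hR hK' hs hseg (hR.trans_le ha) hfar k
    _ = M * K' * ‖z - z'‖ * ∑ k ∈ Finset.range j, (a + k / 2) ^ (-1 - s) := by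
        rw [Finset.mul_sum]; congr! 1 with k; ring
    _ ≤ M * K' * ‖z - z'‖ * (a ^ (-(s / 2)) * ∑' k : ℕ, (R + k / 2) ^ (-1 - s / 2)) := by
        gcongr; exact sum_add_half_rpow_le hR ha hs j
    _ = _ := by ring

end IsPerturbedTranslation

theorem cos_mul_norm_le_re_of_mem_Vfiber {R θ : ℝ} (hθ : θ ≤ Real.pi) {z : ℂ}
    (hz : z ∈ Vfiber R θ) : Real.cos θ * ‖z‖ ≤ z.re := by
  rw [← norm_mul_cos_arg, mul_comm, ← Real.cos_abs z.arg]
  gcongr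
  exact Real.cos_le_cos_of_nonneg_of_le_pi (abs_nonneg _) hθ hz.2.le

theorem isOpen_Vfiber {R θ : ℝ} (hR : 0 ≤ R) (hθ : θ ≤ Real.pi) : IsOpen (Vfiber R θ) := by
  refine isOpen_iff_mem_nhds.2 fun z hz => ?_
  have hslit : z ∈ slitPlane := mem_slitPlane_iff_arg.2
    ⟨fun h => by linarith [hz.2, abs_of_nonneg (h ▸ Real.pi_pos.le)],
      norm_pos_iff.1 (hR.trans_lt hz.1)⟩
  exact (continuousAt_const.eventually_lt continuous_norm.continuousAt hz.1).and
    ((continuousAt_arg hslit).abs.eventually_lt continuousAt_const hz.2)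

theorem mul_re_le_re_of_mem_segment {p z w : ℂ} {t : ℝ} (hp : 0 ≤ p.re) (hz : 0 ≤ z.re)
    (ht : t ≤ 1) (hw : w ∈ segment ℝ ((1 - t) • p + t • z) z) : t * z.re ≤ w.re := by
  obtain ⟨u, v, hu, hv, huv, rfl⟩ := hw
  have hup : 0 ≤ u * (1 - t) * p.re := by have := sub_nonneg.2 ht; positivity
  have hvz : 0 ≤ v * (1 - t) * z.re := by have := sub_nonneg.2 ht; positivity
  simp only [add_re, smul_re, smul_eq_mul]
  linear_combination hup + hvz - t * z.re * huv

theorem isLittleO_id_of_norm_sub_le {V : Set ℂ} {p : ℂ} {c : ℝ} {g : ℂ → ℂ} {ω : ℝ → ℝ}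
    (hc : 0 < c) (hre : ∀ z ∈ V, c * ‖z‖ ≤ z.re) (hseg : ∀ z ∈ V, segment ℝ p z ⊆ V)
    (hω : Tendsto ω atTop (𝓝 0))
    (hlip : ∀ a z z', segment ℝ z' z ⊆ V → (∀ w ∈ segment ℝ z' z, a ≤ ‖w‖) →
      ‖g z - g z'‖ ≤ ω a * ‖z - z'‖) :
    g =o[cobounded ℂ ⊓ 𝓟 V] id := by
  refine Asymptotics.isLittleO_iff.2 fun ε hε => ?_
  -- Cut `[p, z]` at `z₀ = (1 - t) p + t z`: far from the origin the Lipschitz constant `ω A` of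
  -- `g` is small, while on the short piece `[p, z₀]` the crude constant `ω 0` is harmless.
  set t := min 1 (ε / (4 * (|ω 0| + 1)))
  have ht0 : 0 < t := lt_min one_pos (by positivity)
  have ht1 : t ≤ 1 := min_le_left _ _
  have htω : ω 0 * t ≤ ε / 4 := by
    calc ω 0 * t ≤ (|ω 0| + 1) * (ε / (4 * (|ω 0| + 1))) := by
          gcongr
          · linarith [le_abs_self (ω 0)]
          · exact min_le_right _ _
      _ = ε / 4 := by field_simp
  obtain ⟨A, hA⟩ := (hω.eventually_lt_const (by positivity : (0 : ℝ) < ε / 4)).exists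
  have hbig : ∀ᶠ z in cobounded ℂ ⊓ 𝓟 V, A / (t * c) ≤ ‖z‖ ∧ ‖p‖ + 2 * ‖g p‖ / ε ≤ ‖z‖ :=
    (tendsto_norm_cobounded_atTop.eventually_ge_atTop _).and
      (tendsto_norm_cobounded_atTop.eventually_ge_atTop _) |>.filter_mono inf_le_left
  filter_upwards [hbig, mem_inf_of_right (mem_principal_self V)] with z ⟨hzA, hzp⟩ hz
  set z₀ : ℂ := (1 - t) • p + t • z
  have hz₀ : z₀ ∈ segment ℝ p z := ⟨1 - t, t, by linarith, ht0.le, by ring, rfl⟩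
  have hpV : p ∈ V := hseg z hz (left_mem_segment ℝ p z)
  have hnear : ‖g z₀ - g p‖ ≤ ε / 4 * ‖z - p‖ := by
    have h := hlip 0 z₀ p ((convex_segment p z).segment_subset (left_mem_segment ℝ p z) hz₀
      |>.trans (hseg z hz)) fun w _ => norm_nonneg w
    rw [show z₀ - p = t • (z - p) by module, norm_smul, Real.norm_of_nonneg ht0.le] at h
    nlinarith [norm_nonneg (z - p)]
  have hfar : ‖g z - g z₀‖ ≤ ε / 4 * ‖z - p‖ := by
    have hw : ∀ w ∈ segment ℝ z₀ z, A ≤ ‖w‖ := fun w hw => by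
      have := mul_re_le_re_of_mem_segment (by nlinarith [hre p hpV, norm_nonneg p])
        (by nlinarith [hre z hz, norm_nonneg z]) ht1 hw
      have hA' : A ≤ t * c * ‖z‖ := (div_le_iff₀' (by positivity)).1 hzA
      nlinarith [hre z hz, re_le_norm w]
    have h := hlip A z z₀ ((convex_segment p z).segment_subset hz₀ (right_mem_segment ℝ p z)
      |>.trans (hseg z hz)) hw
    rw [show z - z₀ = (1 - t) • (z - p) by module, norm_smul,
      Real.norm_of_nonneg (by linarith)] at h
    have h1t : 0 ≤ (1 - t) * ‖z - p‖ := by have := sub_nonneg.2 ht1; positivity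
    calc ‖g z - g z₀‖ ≤ ε / 4 * ((1 - t) * ‖z - p‖) := h.trans (by gcongr)
      _ ≤ ε / 4 * ‖z - p‖ := by gcongr; nlinarith [norm_nonneg (z - p)]
  calc ‖g z‖ = ‖(g z - g z₀) + (g z₀ - g p) + g p‖ := by ring_nf
    _ ≤ ε / 4 * ‖z - p‖ + ε / 4 * ‖z - p‖ + ‖g p‖ := by
        grw [norm_add₃_le, hfar, hnear]
    _ ≤ ε / 2 * (‖z‖ + ‖p‖) + ‖g p‖ := by nlinarith [norm_sub_le z p]
    _ ≤ ε * ‖id z‖ := by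
        have h : 2 * ‖g p‖ ≤ ε * (‖z‖ - ‖p‖) := by rw [← div_le_iff₀' hε]; linarith
        rw [id]
        linarith

theorem fatou_coordinate_asymptotics_general
    (θ R γ d K' : ℝ)
    (hθ : 0 < θ) (hθ' : θ < Real.pi / 2) (hR : 0 < R)
    (hγ : 0 < γ) (hd : 1 ≤ d) (hK' : 0 < K')
    (fw hw : ℂ → ℂ)
    (hform : ∀ z ∈ Vfiber R θ, fw z = z + 1 + hw z)
    (hmaps : MapsTo fw (Vfiber R θ) (Vfiber R θ))
    (hdiff : ∀ z ∈ Vfiber R θ, DifferentiableAt ℂ hw z)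
    (hderiv : ∀ z ∈ Vfiber R θ, ‖deriv hw z‖ ≤ K' * ‖z‖ ^ (-1 - γ / d))
    (hgrow : ∀ z ∈ Vfiber R θ, ‖z‖ + 1 / 2 < ‖fw z‖)
    (p : ℂ)
    (hseg : ∀ z ∈ Vfiber R θ, segment ℝ z p ⊆ Vfiber R θ)
    (β : ℂ → ℂ)
    (hβ : TendstoUniformlyOn (fun j z => fw^[j] z - fw^[j] p) β atTop (Vfiber R θ)) :
    Tendsto (fun z => β z / z) (cobounded ℂ ⊓ 𝓟 (Vfiber R θ)) (𝓝 1) := by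
  have hs : 0 < γ / d := div_pos hγ (by linarith)
  have hθπ : θ ≤ Real.pi := by linarith [Real.pi_pos]
  have hf : IsPerturbedTranslation fw hw (Vfiber R θ) R (γ / d) K' :=
    ⟨isOpen_Vfiber hR.le hθπ, hmaps, hform, hdiff, hderiv, hgrow, fun z hz => hz.1⟩
  obtain ⟨C, hC⟩ := hf.exists_norm_sub_sub_le hR hK'.le hs fun z hz => hβ.tendsto_at hz
  have hω : Tendsto (fun a => C * max a R ^ (-(γ / d / 2))) atTop (𝓝 0) := by
    simpa using ((tendsto_rpow_neg_atTop (half_pos hs)).comp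
      (tendsto_atTop_mono (fun a => le_max_left a R) tendsto_id)).const_mul C
  have hlittle : (fun z => β z - z) =o[cobounded ℂ ⊓ 𝓟 (Vfiber R θ)] id :=
    isLittleO_id_of_norm_sub_le (Real.cos_pos_of_mem_Ioo ⟨by linarith, by linarith⟩)
      (fun z hz => cos_mul_norm_le_re_of_mem_Vfiber hθπ hz)
      (fun z hz => segment_symm ℝ p z ▸ hseg z hz) hω
      fun a z z' hzz' hfar => hC _ (le_max_right a R) z z' hzz' fun w hw =>
        max_le (hfar w hw) (hzz' hw).1.le
  have hne : ∀ᶠ z in cobounded ℂ ⊓ 𝓟 (Vfiber R θ), z ≠ 0 :=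
    mem_inf_of_right <| mem_principal.2 fun z hz => norm_pos_iff.1 (hR.trans hz.1)
  have h := hlittle.tendsto_div_nhds_zero.const_add 1
  rw [add_zero] at h
  exact h.congr' (hne.mono fun z hz => by simp [sub_div, div_self hz])

theorem fatou_coordinate_asymptotics
    (θ R γ d K K' : ℝ)
    (hθ : 0 < θ) (hθ' : θ < Real.pi / 2) (hR : 0 < R)
    (hγ : 0 < γ) (hd : 1 ≤ d) (hK : 0 < K) (hK' : 0 < K')
    (fw hw : ℂ → ℂ)
    (hform : ∀ z ∈ Vfiber R θ, fw z = z + 1 + hw z)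
    (hmaps : MapsTo fw (Vfiber R θ) (Vfiber R θ))
    (hdiff : ∀ z ∈ Vfiber R θ, DifferentiableAt ℂ hw z)
    (hbound : ∀ z ∈ Vfiber R θ, ‖hw z‖ ≤ K * ‖z‖ ^ (-(γ / d)))
    (hderiv : ∀ z ∈ Vfiber R θ, ‖deriv hw z‖ ≤ K' * ‖z‖ ^ (-1 - γ / d))
    (hgrow : ∀ z ∈ Vfiber R θ, ‖z‖ + 1 / 2 < ‖fw z‖)
    (p : ℂ) (hp : p ∈ Vfiber R θ)
    (hseg : ∀ z ∈ Vfiber R θ, segment ℝ z p ⊆ Vfiber R θ)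
    (β : ℂ → ℂ)
    (hβ : TendstoUniformlyOn (fun j z => fw^[j] z - fw^[j] p) β atTop (Vfiber R θ)) :
    Tendsto (fun z => β z / z) (cobounded ℂ ⊓ 𝓟 (Vfiber R θ)) (𝓝 1) :=
  fatou_coordinate_asymptotics_general θ R γ d K' hθ hθ' hR hγ hd hK' fw hw hform hmaps hdiff hderiv
    hgrow p hseg β hβ
end
end
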